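/- arXiv:2212.12863 — 3 statements merged into one kernel-verified Lean document; each statement's English description precedes it below -/
import Mathlib

section
/- Let k be a commutative ring and A a flat commutative Hopf algebra over k, and suppose the trivial subcomodule k ⊆ A (the image of the unit) has an A-subcomodule complement P for the left-regular coaction, so that A = k ⊕ P as comodules, with P^G = 0. If Q is another subcomodule complement, A = k ⊕ Q, with Q^G = 0, and every surjection of comodules onto k splits on invariants, then Q = P. -/
open TensorProduct

/-- A comodule structure on a `k`-module `M` over a `k`-coalgebra `A`: a coaction map
`ρ : M → M ⊗[k] A` which is coassociative and counital. -/
structure Comod (k A M : Type*) [CommRing k]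
    [AddCommGroup A] [Module k A] [Coalgebra k A]
    [AddCommGroup M] [Module k M] where
  ρ : M →ₗ[k] M ⊗[k] A
  coassoc : ∀ m : M,
    (TensorProduct.assoc k M A A) (LinearMap.rTensor A ρ (ρ m)) =
      LinearMap.lTensor M (Coalgebra.comul (R := k)) (ρ m)
  counit : ∀ m : M,
    (TensorProduct.rid k M) (LinearMap.lTensor M (Coalgebra.counit (R := k)) (ρ m)) = m

variable {k A M N : Type*} [CommRing k]
  [AddCommGroup A] [Module k A] [Coalgebra k A]
  [AddCommGroup M] [Module k M] [AddCommGroup N] [Module k N]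

/-- The invariants `M^G` of a comodule: elements `m` with `ρ m = m ⊗ 1`.  (For a Hopf algebra
`A`, `1` is the unit of `A`; this is the kernel of `Δ_M - id ⊗ 1`.) -/
def Comod.invariants [One A] (c : Comod k A M) : Submodule k M where
  carrier := {m | c.ρ m = m ⊗ₜ[k] (1 : A)}
  add_mem' := by
    intro a b ha hb
    simp only [Set.mem_setOf_eq, map_add] at *
    rw [ha, hb, TensorProduct.add_tmul]
  zero_mem' := by simp
  smul_mem' := by
    intro r m hm
    simp only [Set.mem_setOf_eq, map_smul] at *
    rw [hm, TensorProduct.smul_tmul']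

/-- A `k`-linear map between comodules is a comodule homomorphism if it intertwines the
coactions. -/
def IsComodHom (cM : Comod k A M) (cN : Comod k A N) (f : M →ₗ[k] N) : Prop :=
  ∀ m : M, LinearMap.rTensor A f (cM.ρ m) = cN.ρ (f m)

variable {k A M : Type*}

/-- A submodule `P ⊆ M` is a subcomodule if the coaction maps `P` into `P ⊗ A ⊆ M ⊗ A`. -/
def IsSubcomod [CommRing k] [AddCommGroup A] [Module k A] [Coalgebra k A]
    [AddCommGroup M] [Module k M] (c : Comod k A M) (P : Submodule k M) : Prop :=
  ∀ x ∈ P, c.ρ x ∈ LinearMap.range (LinearMap.rTensor A P.subtype)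

section ConvolutionAux

open Coalgebra HopfAlgebra

variable {R : Type*} [CommRing R]

section Conv

variable {C B : Type*} [AddCommGroup C] [Module R C] [Coalgebra R C] [Ring B] [Algebra R B]

/-- Convolution product of linear maps from a coalgebra to an algebra. -/
noncomputable def myConv (f g : C →ₗ[R] B) : C →ₗ[R] B :=
  LinearMap.mul' R B ∘ₗ TensorProduct.map f g ∘ₗ Coalgebra.comul

/-- The unit of the convolution algebra. -/
noncomputable def myUnit : C →ₗ[R] B := Algebra.linearMap R B ∘ₗ Coalgebra.counit

lemma myUnit_apply (a : C) :
    (myUnit : C →ₗ[R] B) a = algebraMap R B (Coalgebra.counit (R := R) a) := rfl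

lemma myConv_repr (f g : C →ₗ[R] B) {a : C} {ι : Type*} (r : Coalgebra.Repr R a ι) :
    myConv f g a = ∑ i ∈ r.index, f (r.left i) * g (r.right i) := by
  simp only [myConv, LinearMap.comp_apply, ← r.eq, map_sum, TensorProduct.map_tmul,
    LinearMap.mul'_apply]

lemma repr_sum_counit_smul {a : C} {ι : Type*} (r : Coalgebra.Repr R a ι) :
    ∑ i ∈ r.index, Coalgebra.counit (R := R) (r.left i) • r.right i = a := by
  have h := Coalgebra.sum_counit_tmul_eq r
  apply_fun (TensorProduct.lid R C) at h
  simpa only [map_sum, TensorProduct.lid_tmul, one_smul] using h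

lemma repr_sum_smul_counit {a : C} {ι : Type*} (r : Coalgebra.Repr R a ι) :
    ∑ i ∈ r.index, Coalgebra.counit (R := R) (r.right i) • r.left i = a := by
  have h := Coalgebra.sum_tmul_counit_eq r
  apply_fun (TensorProduct.rid R C) at h
  simpa only [map_sum, TensorProduct.rid_tmul, one_smul] using h

lemma myConv_unit_left (f : C →ₗ[R] B) : myConv myUnit f = f := by
  ext a
  rw [myConv_repr _ _ (ℛ R a)]
  calc ∑ i ∈ (ℛ R a).index, myUnit ((ℛ R a).left i) * f ((ℛ R a).right i)
      = ∑ i ∈ (ℛ R a).index,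
          Coalgebra.counit (R := R) ((ℛ R a).left i) • f ((ℛ R a).right i) := by
        refine Finset.sum_congr rfl fun i _ => ?_
        rw [myUnit_apply, ← Algebra.smul_def]
    _ = f (∑ i ∈ (ℛ R a).index,
          Coalgebra.counit (R := R) ((ℛ R a).left i) • (ℛ R a).right i) := by
        rw [map_sum]; exact Finset.sum_congr rfl fun i _ => (map_smul f _ _).symm
    _ = f a := by rw [repr_sum_counit_smul]

lemma myConv_unit_right (f : C →ₗ[R] B) : myConv f myUnit = f := by
  ext a
  rw [myConv_repr _ _ (ℛ R a)]
  calc ∑ i ∈ (ℛ R a).index, f ((ℛ R a).left i) * myUnit ((ℛ R a).right i)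
      = ∑ i ∈ (ℛ R a).index,
          Coalgebra.counit (R := R) ((ℛ R a).right i) • f ((ℛ R a).left i) := by
        refine Finset.sum_congr rfl fun i _ => ?_
        rw [myUnit_apply, ← Algebra.commutes, ← Algebra.smul_def]
    _ = f (∑ i ∈ (ℛ R a).index,
          Coalgebra.counit (R := R) ((ℛ R a).right i) • (ℛ R a).left i) := by
        rw [map_sum]; exact Finset.sum_congr rfl fun i _ => (map_smul f _ _).symm
    _ = f a := by rw [repr_sum_smul_counit]

lemma myConv_assoc (f g h : C →ₗ[R] B) :
    myConv (myConv f g) h = myConv f (myConv g h) := by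
  ext a
  have key := Coalgebra.sum_map_tmul_tmul_eq (R := R) f g h a (repr := ℛ R a)
      (a₁ := fun i => ℛ R ((ℛ R a).left i)) (a₂ := fun i => ℛ R ((ℛ R a).right i))
  apply_fun (fun z => (LinearMap.mul' R B) ((LinearMap.lTensor B (LinearMap.mul' R B)) z)) at key
  simp only [map_sum, LinearMap.lTensor_tmul, LinearMap.mul'_apply] at key
  rw [myConv_repr _ _ (ℛ R a), myConv_repr _ _ (ℛ R a)]
  calc ∑ i ∈ (ℛ R a).index, myConv f g ((ℛ R a).left i) * h ((ℛ R a).right i)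
      = ∑ i ∈ (ℛ R a).index, ∑ j ∈ (ℛ R ((ℛ R a).left i)).index,
          f ((ℛ R ((ℛ R a).left i)).left j) *
            (g ((ℛ R ((ℛ R a).left i)).right j) * h ((ℛ R a).right i)) := by
        refine Finset.sum_congr rfl fun i _ => ?_
        rw [myConv_repr _ _ (ℛ R ((ℛ R a).left i)), Finset.sum_mul]
        exact Finset.sum_congr rfl fun j _ => mul_assoc _ _ _
    _ = ∑ i ∈ (ℛ R a).index, ∑ j ∈ (ℛ R ((ℛ R a).right i)).index,
          f ((ℛ R a).left i) *
            (g ((ℛ R ((ℛ R a).right i)).left j) * h ((ℛ R ((ℛ R a).right i)).right j)) :=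
        key.symm
    _ = ∑ i ∈ (ℛ R a).index, f ((ℛ R a).left i) * myConv g h ((ℛ R a).right i) := by
        refine Finset.sum_congr rfl fun i _ => ?_
        rw [myConv_repr _ _ (ℛ R ((ℛ R a).right i)), Finset.mul_sum]

end Conv

section Hopf

variable {H : Type*} [CommRing H] [HopfAlgebra R H]

lemma my_antipode_one : HopfAlgebra.antipode (R := R) (1 : H) = 1 := by
  have h := HopfAlgebra.mul_antipode_rTensor_comul_apply (R := R) (a := (1 : H))
  simpa [Algebra.TensorProduct.one_def] using h

lemma myConv_antipode_id :
    myConv (HopfAlgebra.antipode (R := R) (A := H)) LinearMap.id = (myUnit : H →ₗ[R] H) := by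
  ext a
  rw [myConv_repr _ _ (ℛ R a), myUnit_apply]
  simpa using HopfAlgebra.sum_antipode_mul_eq_algebraMap_counit (ℛ R a)

lemma myConv_id_antipode :
    myConv LinearMap.id (HopfAlgebra.antipode (R := R) (A := H)) = (myUnit : H →ₗ[R] H) := by
  ext a
  rw [myConv_repr _ _ (ℛ R a), myUnit_apply]
  simpa using HopfAlgebra.sum_mul_antipode_eq_algebraMap_counit (ℛ R a)

/-- `a ↦ ∑ S(a₂) ⊗ S(a₁)`. -/
noncomputable def fS : H →ₗ[R] H ⊗[R] H :=
  TensorProduct.map (HopfAlgebra.antipode (R := R)) (HopfAlgebra.antipode (R := R)) ∘ₗ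
    (TensorProduct.comm R H H).toLinearMap ∘ₗ Coalgebra.comul

lemma fS_repr {a : H} {ι : Type*} (r : Coalgebra.Repr R a ι) :
    fS a = ∑ i ∈ r.index, HopfAlgebra.antipode (R := R) (r.right i) ⊗ₜ[R]
      HopfAlgebra.antipode (R := R) (r.left i) := by
  simp only [fS, LinearMap.comp_apply, LinearEquiv.coe_coe, ← r.eq, map_sum,
    TensorProduct.comm_tmul, TensorProduct.map_tmul]

lemma myConv_comulS_comul :
    myConv ((Coalgebra.comul (R := R) (A := H)) ∘ₗ HopfAlgebra.antipode (R := R))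
      (Coalgebra.comul (R := R) (A := H)) = (myUnit : H →ₗ[R] H ⊗[R] H) := by
  ext a
  rw [myConv_repr _ _ (ℛ R a), myUnit_apply]
  simp only [LinearMap.comp_apply, ← Bialgebra.comul_mul]
  rw [← map_sum, HopfAlgebra.sum_antipode_mul_eq_algebraMap_counit (ℛ R a), Bialgebra.comul_algebraMap]

/-- `Gp (u ⊗ v) = Δ(u) * (1 ⊗ S v)`. -/
noncomputable def Gp : H ⊗[R] H →ₗ[R] H ⊗[R] H :=
  LinearMap.mul' R (H ⊗[R] H) ∘ₗ
    TensorProduct.map (Coalgebra.comul)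
      ((TensorProduct.mk R H H) 1 ∘ₗ HopfAlgebra.antipode (R := R))

lemma Gp_tmul (u v : H) :
    Gp (u ⊗ₜ[R] v) =
      Coalgebra.comul (R := R) u * ((1 : H) ⊗ₜ[R] HopfAlgebra.antipode (R := R) v) := by
  simp [Gp]

lemma Gp_comul (x : H) : Gp (Coalgebra.comul (R := R) x) = x ⊗ₜ[R] (1 : H) := by
  have key := Coalgebra.sum_tmul_tmul_eq (ℛ R x) (fun i => ℛ R ((ℛ R x).left i))
      (fun i => ℛ R ((ℛ R x).right i))
  apply_fun (LinearMap.lTensor H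
      (LinearMap.mul' R H ∘ₗ LinearMap.lTensor H (HopfAlgebra.antipode (R := R)))) at key
  simp only [map_sum, LinearMap.lTensor_tmul, LinearMap.comp_apply,
    LinearMap.mul'_apply] at key
  calc Gp (Coalgebra.comul (R := R) x)
      = ∑ i ∈ (ℛ R x).index, Gp ((ℛ R x).left i ⊗ₜ[R] (ℛ R x).right i) := by
        rw [← (ℛ R x).eq, map_sum]
    _ = ∑ i ∈ (ℛ R x).index, ∑ j ∈ (ℛ R ((ℛ R x).left i)).index,
          (ℛ R ((ℛ R x).left i)).left j ⊗ₜ[R]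
            ((ℛ R ((ℛ R x).left i)).right j * HopfAlgebra.antipode (R := R) ((ℛ R x).right i)) := by
        refine Finset.sum_congr rfl fun i _ => ?_
        rw [Gp_tmul, ← (ℛ R ((ℛ R x).left i)).eq, Finset.sum_mul]
        refine Finset.sum_congr rfl fun j _ => ?_
        rw [Algebra.TensorProduct.tmul_mul_tmul, mul_one]
    _ = ∑ i ∈ (ℛ R x).index, ∑ j ∈ (ℛ R ((ℛ R x).right i)).index,
          (ℛ R x).left i ⊗ₜ[R]
            ((ℛ R ((ℛ R x).right i)).left j *
              HopfAlgebra.antipode (R := R) ((ℛ R ((ℛ R x).right i)).right j)) := key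
    _ = ∑ i ∈ (ℛ R x).index,
          (ℛ R x).left i ⊗ₜ[R] algebraMap R H (Coalgebra.counit (R := R) ((ℛ R x).right i)) := by
        refine Finset.sum_congr rfl fun i _ => ?_
        rw [← TensorProduct.tmul_sum, HopfAlgebra.sum_mul_antipode_eq_algebraMap_counit (ℛ R ((ℛ R x).right i))]
    _ = x ⊗ₜ[R] (1 : H) := by
        have h : ∀ i ∈ (ℛ R x).index,
            (ℛ R x).left i ⊗ₜ[R] algebraMap R H (Coalgebra.counit (R := R) ((ℛ R x).right i))
              = (Coalgebra.counit (R := R) ((ℛ R x).right i) • (ℛ R x).left i) ⊗ₜ[R] (1 : H) := by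
          intro i _
          rw [Algebra.algebraMap_eq_smul_one, TensorProduct.tmul_smul,
            TensorProduct.smul_tmul']
        rw [Finset.sum_congr rfl h, ← TensorProduct.sum_tmul, repr_sum_smul_counit]

lemma myConv_comul_fS :
    myConv (Coalgebra.comul (R := R) (A := H)) fS = (myUnit : H →ₗ[R] H ⊗[R] H) := by
  ext a
  have key := Coalgebra.sum_tmul_tmul_eq (ℛ R a) (fun i => ℛ R ((ℛ R a).left i))
      (fun i => ℛ R ((ℛ R a).right i))
  apply_fun (fun z => (LinearMap.mul' R (H ⊗[R] H))
      ((TensorProduct.map (Coalgebra.comul)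
        ((TensorProduct.map (HopfAlgebra.antipode (R := R)) (HopfAlgebra.antipode (R := R))) ∘ₗ
          (TensorProduct.comm R H H).toLinearMap)) z)) at key
  simp only [map_sum, TensorProduct.map_tmul, LinearMap.comp_apply, LinearEquiv.coe_coe,
    TensorProduct.comm_tmul, LinearMap.mul'_apply] at key
  rw [myConv_repr _ _ (ℛ R a), myUnit_apply]
  calc ∑ i ∈ (ℛ R a).index, Coalgebra.comul ((ℛ R a).left i) * fS ((ℛ R a).right i)
      = ∑ i ∈ (ℛ R a).index, ∑ j ∈ (ℛ R ((ℛ R a).right i)).index,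
          Coalgebra.comul ((ℛ R a).left i) *
            (HopfAlgebra.antipode (R := R) ((ℛ R ((ℛ R a).right i)).right j) ⊗ₜ[R]
              HopfAlgebra.antipode (R := R) ((ℛ R ((ℛ R a).right i)).left j)) := by
        refine Finset.sum_congr rfl fun i _ => ?_
        rw [fS_repr (ℛ R ((ℛ R a).right i)), Finset.mul_sum]
    _ = ∑ i ∈ (ℛ R a).index, ∑ j ∈ (ℛ R ((ℛ R a).left i)).index,
          Coalgebra.comul ((ℛ R ((ℛ R a).left i)).left j) *
            (HopfAlgebra.antipode (R := R) ((ℛ R a).right i) ⊗ₜ[R]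
              HopfAlgebra.antipode (R := R) ((ℛ R ((ℛ R a).left i)).right j)) := key.symm
    _ = ∑ i ∈ (ℛ R a).index,
          ((ℛ R a).left i ⊗ₜ[R] (1 : H)) *
            (HopfAlgebra.antipode (R := R) ((ℛ R a).right i) ⊗ₜ[R] (1 : H)) := by
        refine Finset.sum_congr rfl fun i _ => ?_
        calc ∑ j ∈ (ℛ R ((ℛ R a).left i)).index,
              Coalgebra.comul ((ℛ R ((ℛ R a).left i)).left j) *
                (HopfAlgebra.antipode (R := R) ((ℛ R a).right i) ⊗ₜ[R]
                  HopfAlgebra.antipode (R := R) ((ℛ R ((ℛ R a).left i)).right j))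
            = (∑ j ∈ (ℛ R ((ℛ R a).left i)).index,
                Gp ((ℛ R ((ℛ R a).left i)).left j ⊗ₜ[R] (ℛ R ((ℛ R a).left i)).right j)) *
                (HopfAlgebra.antipode (R := R) ((ℛ R a).right i) ⊗ₜ[R] (1 : H)) := by
              rw [Finset.sum_mul]
              refine Finset.sum_congr rfl fun j _ => ?_
              rw [Gp_tmul, mul_assoc, Algebra.TensorProduct.tmul_mul_tmul, one_mul, mul_one]
          _ = ((ℛ R a).left i ⊗ₜ[R] (1 : H)) *
                (HopfAlgebra.antipode (R := R) ((ℛ R a).right i) ⊗ₜ[R] (1 : H)) := by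
              rw [← map_sum, (ℛ R ((ℛ R a).left i)).eq, Gp_comul]
    _ = (∑ i ∈ (ℛ R a).index,
          (ℛ R a).left i * HopfAlgebra.antipode (R := R) ((ℛ R a).right i)) ⊗ₜ[R] (1 : H) := by
        rw [TensorProduct.sum_tmul]
        refine Finset.sum_congr rfl fun i _ => ?_
        rw [Algebra.TensorProduct.tmul_mul_tmul, mul_one]
    _ = algebraMap R (H ⊗[R] H) (Coalgebra.counit (R := R) a) := by
        rw [HopfAlgebra.sum_mul_antipode_eq_algebraMap_counit (ℛ R a)]
        simp

lemma comul_comp_antipode :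
    (Coalgebra.comul (R := R) (A := H)) ∘ₗ HopfAlgebra.antipode (R := R) = fS := by
  calc (Coalgebra.comul (R := R) (A := H)) ∘ₗ HopfAlgebra.antipode (R := R)
      = myConv ((Coalgebra.comul (R := R) (A := H)) ∘ₗ HopfAlgebra.antipode (R := R)) myUnit :=
        (myConv_unit_right _).symm
    _ = myConv ((Coalgebra.comul (R := R) (A := H)) ∘ₗ HopfAlgebra.antipode (R := R))
          (myConv (Coalgebra.comul (R := R) (A := H)) fS) := by rw [myConv_comul_fS]
    _ = myConv (myConv ((Coalgebra.comul (R := R) (A := H)) ∘ₗ HopfAlgebra.antipode (R := R))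
          (Coalgebra.comul (R := R) (A := H))) fS := (myConv_assoc _ _ _).symm
    _ = myConv myUnit fS := by rw [myConv_comulS_comul]
    _ = fS := myConv_unit_left _

lemma comul_antipode_repr {a : H} {ι : Type*} (r : Coalgebra.Repr R a ι) :
    Coalgebra.comul (R := R) (HopfAlgebra.antipode (R := R) a) =
      ∑ i ∈ r.index, HopfAlgebra.antipode (R := R) (r.right i) ⊗ₜ[R]
        HopfAlgebra.antipode (R := R) (r.left i) := by
  have h := LinearMap.congr_fun (comul_comp_antipode (R := R) (H := H)) a
  rw [LinearMap.comp_apply] at h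
  rw [h, fS_repr r]

lemma my_counit_antipode (a : H) :
    Coalgebra.counit (R := R) (HopfAlgebra.antipode (R := R) a) = Coalgebra.counit (R := R) a := by
  have h := congrArg (Coalgebra.counit (R := R)) (HopfAlgebra.sum_antipode_mul_eq_algebraMap_counit (ℛ R a))
  simp only [map_sum, Bialgebra.counit_mul, Bialgebra.counit_algebraMap] at h
  have key : Coalgebra.counit (R := R) (HopfAlgebra.antipode (R := R) a)
      = ∑ i ∈ (ℛ R a).index,
          Coalgebra.counit (R := R) (HopfAlgebra.antipode (R := R) ((ℛ R a).left i)) *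
            Coalgebra.counit (R := R) ((ℛ R a).right i) := by
    conv_lhs => rw [← repr_sum_smul_counit (ℛ R a)]
    rw [map_sum, map_sum]
    refine Finset.sum_congr rfl fun i _ => ?_
    rw [map_smul, map_smul, smul_eq_mul, mul_comm]
  rw [key, h]

lemma my_antipode_antipode (a : H) :
    HopfAlgebra.antipode (R := R) (HopfAlgebra.antipode (R := R) a) = a := by
  have hconv : myConv (HopfAlgebra.antipode (R := R) (A := H))
      (HopfAlgebra.antipode (R := R) ∘ₗ HopfAlgebra.antipode (R := R)) = myUnit := by
    ext b
    rw [myConv_repr _ _ (ℛ R b), myUnit_apply]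
    have hr : ∑ i ∈ (ℛ R b).index,
        (fun i => HopfAlgebra.antipode (R := R) ((ℛ R b).right i)) i ⊗ₜ[R]
          (fun i => HopfAlgebra.antipode (R := R) ((ℛ R b).left i)) i
        = Coalgebra.comul (R := R) (HopfAlgebra.antipode (R := R) b) :=
      (comul_antipode_repr (ℛ R b)).symm
    have h2 := HopfAlgebra.sum_antipode_mul_eq_algebraMap_counit
      (⟨(ℛ R b).index, fun i => HopfAlgebra.antipode (R := R) ((ℛ R b).right i),
        fun i => HopfAlgebra.antipode (R := R) ((ℛ R b).left i), hr⟩ :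
          Coalgebra.Repr R (HopfAlgebra.antipode (R := R) b) (H × H))
    simp only at h2
    calc ∑ i ∈ (ℛ R b).index, HopfAlgebra.antipode (R := R) ((ℛ R b).left i) *
          (HopfAlgebra.antipode (R := R) ∘ₗ HopfAlgebra.antipode (R := R)) ((ℛ R b).right i)
        = ∑ i ∈ (ℛ R b).index,
            HopfAlgebra.antipode (R := R) (HopfAlgebra.antipode (R := R) ((ℛ R b).right i)) *
              HopfAlgebra.antipode (R := R) ((ℛ R b).left i) := by
          refine Finset.sum_congr rfl fun i _ => ?_
          rw [LinearMap.comp_apply, mul_comm]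
      _ = algebraMap R H (Coalgebra.counit (R := R) (HopfAlgebra.antipode (R := R) b)) := h2
      _ = algebraMap R H (Coalgebra.counit (R := R) b) := by rw [my_counit_antipode]
  have hSS : (HopfAlgebra.antipode (R := R) (A := H)) ∘ₗ HopfAlgebra.antipode (R := R)
      = LinearMap.id := by
    calc (HopfAlgebra.antipode (R := R) (A := H)) ∘ₗ HopfAlgebra.antipode (R := R)
        = myConv myUnit ((HopfAlgebra.antipode (R := R) (A := H)) ∘ₗ
            HopfAlgebra.antipode (R := R)) := (myConv_unit_left _).symm
      _ = myConv (myConv LinearMap.id (HopfAlgebra.antipode (R := R)))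
            ((HopfAlgebra.antipode (R := R) (A := H)) ∘ₗ HopfAlgebra.antipode (R := R)) := by
          rw [myConv_id_antipode]
      _ = myConv LinearMap.id (myConv (HopfAlgebra.antipode (R := R))
            ((HopfAlgebra.antipode (R := R) (A := H)) ∘ₗ HopfAlgebra.antipode (R := R))) :=
          myConv_assoc _ _ _
      _ = myConv LinearMap.id myUnit := by rw [hconv]
      _ = LinearMap.id := myConv_unit_right _
  exact LinearMap.congr_fun hSS a

end Hopf

end ConvolutionAux

open Coalgebra HopfAlgebra


/-- Uniqueness of the comodule complement of the trivial subcomodule `k ⊆ A`:  let `A` be a flat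
commutative Hopf algebra over `k`, viewed as a comodule over itself via comultiplication (the left
regular coaction).  Suppose every surjection of comodules onto the trivial comodule `k` is
surjective on invariants (linear reductivity).  If `P` and `Q` are subcomodule complements of the
scalars `k·1 ⊆ A` with `P^G = 0` and `Q^G = 0`, then `Q = P`. -/
theorem stmt_11 (k A : Type*) [CommRing k] [CommRing A] [HopfAlgebra k A] [Module.Flat k A]
    (cA : Comod k A A) (hρ : cA.ρ = Coalgebra.comul (R := k))
    (hLR : ∀ (V : Type*) [AddCommGroup V] [Module k V] (cV : Comod k A V) (π : V →ₗ[k] k),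
      (∀ v : V, LinearMap.rTensor A π (cV.ρ v) = (π v) ⊗ₜ[k] (1 : A)) →
      Function.Surjective π →
      ∀ a : k, ∃ v ∈ cV.invariants, π v = a)
    (P Q : Submodule k A)
    (hP : IsCompl (Submodule.span k {(1 : A)}) P) (hPsub : IsSubcomod cA P)
    (hPinv : P ⊓ cA.invariants = ⊥)
    (hQ : IsCompl (Submodule.span k {(1 : A)}) Q) (hQsub : IsSubcomod cA Q)
    (hQinv : Q ⊓ cA.invariants = ⊥) :
    Q = P := by
  classical
  set S1 : Submodule k A := Submodule.span k {(1 : A)} with hS1def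
  have hone : (1 : A) ∈ S1 := Submodule.mem_span_singleton_self 1
  -- the "right absorption" property of the projection onto the scalars along a
  -- subcomodule complement
  have habs : ∀ (W : Submodule k A) (hW : IsCompl S1 W), IsSubcomod cA W →
      ∀ a : A, LinearMap.rTensor A (S1.subtype ∘ₗ Submodule.linearProjOfIsCompl S1 W hW)
        (Coalgebra.comul (R := k) a)
        = ((S1.subtype ∘ₗ Submodule.linearProjOfIsCompl S1 W hW) a) ⊗ₜ[k] (1 : A) := by
    intro W hW hWsub a
    set F : A →ₗ[k] A := S1.subtype ∘ₗ Submodule.linearProjOfIsCompl S1 W hW with hFdef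
    have hF1 : F (1 : A) = 1 := by
      exact congrArg S1.subtype (Submodule.linearProjOfIsCompl_apply_left hW ⟨1, hone⟩)
    have hmem : a ∈ S1 ⊔ W := by rw [hW.sup_eq_top]; trivial
    obtain ⟨s, hs, w, hw, heq⟩ := Submodule.mem_sup.mp hmem
    obtain ⟨c, hc⟩ := Submodule.mem_span_singleton.mp hs
    have hFs : F s = s :=
      congrArg S1.subtype (Submodule.linearProjOfIsCompl_apply_left hW ⟨s, hs⟩)
    have hFw : F w = 0 := by
      have h := Submodule.linearProjOfIsCompl_apply_right' hW hw
      show S1.subtype (Submodule.linearProjOfIsCompl S1 W hW w) = 0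
      exact (congrArg S1.subtype h).trans rfl
    have hcw : LinearMap.rTensor A F (Coalgebra.comul (R := k) w) = 0 := by
      have h1 := hWsub w hw
      rw [hρ] at h1
      obtain ⟨t, ht⟩ := h1
      rw [← ht, ← LinearMap.comp_apply, ← LinearMap.rTensor_comp]
      have hzero : F ∘ₗ W.subtype = 0 := by
        ext x
        have h := Submodule.linearProjOfIsCompl_apply_right' hW x.2
        show S1.subtype (Submodule.linearProjOfIsCompl S1 W hW (x : A)) = 0
        exact (congrArg S1.subtype h).trans rfl
      rw [hzero]
      simp
    have hcs : LinearMap.rTensor A F (Coalgebra.comul (R := k) s) = s ⊗ₜ[k] (1 : A) := by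
      rw [← hc]
      calc LinearMap.rTensor A F (Coalgebra.comul (R := k) (c • (1 : A)))
          = c • LinearMap.rTensor A F (Coalgebra.comul (R := k) (1 : A)) := by
            rw [map_smul, map_smul]
        _ = c • ((1 : A) ⊗ₜ[k] (1 : A)) := by
            rw [Bialgebra.comul_one, Algebra.TensorProduct.one_def,
              LinearMap.rTensor_tmul, hF1]
        _ = (c • (1 : A)) ⊗ₜ[k] (1 : A) := by rw [TensorProduct.smul_tmul']
    calc LinearMap.rTensor A F (Coalgebra.comul (R := k) a)
        = LinearMap.rTensor A F (Coalgebra.comul (R := k) s)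
            + LinearMap.rTensor A F (Coalgebra.comul (R := k) w) := by
          rw [← heq, map_add, map_add]
      _ = s ⊗ₜ[k] (1 : A) := by rw [hcs, hcw, add_zero]
      _ = F a ⊗ₜ[k] (1 : A) := by rw [← heq, map_add, hFs, hFw, add_zero]
  have hEabs := habs P hP hPsub
  have hE'abs := habs Q hQ hQsub
  set E : A →ₗ[k] A := S1.subtype ∘ₗ Submodule.linearProjOfIsCompl S1 P hP with hEdef
  set E' : A →ₗ[k] A := S1.subtype ∘ₗ Submodule.linearProjOfIsCompl S1 Q hQ with hE'def
  have hE1 : E (1 : A) = 1 :=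
    congrArg S1.subtype (Submodule.linearProjOfIsCompl_apply_left hP ⟨1, hone⟩)
  have hE'1 : E' (1 : A) = 1 :=
    congrArg S1.subtype (Submodule.linearProjOfIsCompl_apply_left hQ ⟨1, hone⟩)
  -- the "left absorption" property of `E' ∘ S`, via the antipode
  have hflip : ∀ a : A, LinearMap.lTensor A (E' ∘ₗ HopfAlgebra.antipode (R := k))
      (Coalgebra.comul (R := k) a)
      = (1 : A) ⊗ₜ[k] (E' (HopfAlgebra.antipode (R := k) a)) := by
    intro a
    have h0 := hE'abs (HopfAlgebra.antipode (R := k) a)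
    rw [comul_antipode_repr (ℛ k a)] at h0
    simp only [map_sum, LinearMap.rTensor_tmul] at h0
    apply_fun (fun z => (TensorProduct.comm k A A)
      (LinearMap.lTensor A (HopfAlgebra.antipode (R := k)) z)) at h0
    simp only [map_sum, LinearMap.lTensor_tmul, TensorProduct.comm_tmul,
      my_antipode_antipode, my_antipode_one] at h0
    rw [← (ℛ k a).eq]
    simp only [map_sum, LinearMap.lTensor_tmul, LinearMap.comp_apply]
    exact h0
  -- any normalized absorbing projection agrees with `E' ∘ S`
  have hmain : ∀ (F : A →ₗ[k] A),
      (∀ a : A, LinearMap.rTensor A F (Coalgebra.comul (R := k) a) = F a ⊗ₜ[k] (1 : A)) →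
      F (1 : A) = 1 →
      ∀ a : A, F a = E' (HopfAlgebra.antipode (R := k) a) := by
    intro F hFabs hF1 a
    have h1 : LinearMap.mul' k A (TensorProduct.map F (E' ∘ₗ HopfAlgebra.antipode (R := k))
        (Coalgebra.comul (R := k) a)) = F a := by
      rw [← LinearMap.lTensor_comp_rTensor, LinearMap.comp_apply, hFabs a,
        LinearMap.lTensor_tmul, LinearMap.comp_apply, my_antipode_one, hE'1,
        LinearMap.mul'_apply, mul_one]
    have h2 : LinearMap.mul' k A (TensorProduct.map F (E' ∘ₗ HopfAlgebra.antipode (R := k))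
        (Coalgebra.comul (R := k) a)) = E' (HopfAlgebra.antipode (R := k) a) := by
      rw [← LinearMap.rTensor_comp_lTensor, LinearMap.comp_apply, hflip a,
        LinearMap.rTensor_tmul, hF1, LinearMap.mul'_apply, one_mul]
    rw [← h1, h2]
  have hEE' : ∀ a : A, E a = E' a := by
    intro a
    rw [hmain E hEabs hE1 a, hmain E' hE'abs hE'1 a]
  have hkerE : ∀ a : A, E a = 0 ↔ a ∈ P := by
    intro a
    rw [show E a = ((Submodule.linearProjOfIsCompl S1 P hP a : S1) : A) from rfl,
      Submodule.coe_eq_zero]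
    exact Submodule.linearProjOfIsCompl_apply_eq_zero_iff hP
  have hkerE' : ∀ a : A, E' a = 0 ↔ a ∈ Q := by
    intro a
    rw [show E' a = ((Submodule.linearProjOfIsCompl S1 Q hQ a : S1) : A) from rfl,
      Submodule.coe_eq_zero]
    exact Submodule.linearProjOfIsCompl_apply_eq_zero_iff hQ
  ext a
  rw [← hkerE' a, ← hkerE a, hEE' a]
end

section
/- Let k be a commutative ring, A a commutative Hopf algebra over k, and suppose the trivial subcomodule k ⊆ A has a subcomodule complement P for the left-regular coaction (A = k ⊕ P as comodules with respect to left translation, and P is also stable under right translation). Define I : A → k to be the projection along P, so I(1)=1 and I is a comodule map for both the left and right coactions. Then for every A-comodule V, the map R_V := (id_V ⊗ I) ∘ Δ_V : V → V satisfies: (i) R_V(v) = v for all v ∈ V^G; (ii) the image of R_V lies in V^G; (iii) R_V is natural in V. -/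
/-!
Contracting the `A` factor with `I` commutes with any linear map applied to the other factor, so
`R_V` is natural, and `Δ_V ∘ R_V = R_{V ⊗ A} ∘ Δ_V`. Coassociativity then
rewrites `Δ_V (R_V v)` as `(id_V ⊗ (id_A ⊗ I) ∘ Δ_A) (Δ_V v)`, and the invariance of `I` collapses
`(id_A ⊗ I) ∘ Δ_A` to `a ↦ I a • 1`, leaving `R_V v ⊗ 1`. On invariants `R_V v = I 1 • v = v`.
-/

open TensorProduct

variable {k A M N : Type*} [CommRing k]
  [AddCommGroup A] [Module k A] [Coalgebra k A]
  [AddCommGroup M] [Module k M] [AddCommGroup N] [Module k N]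

namespace TensorProduct

variable {R P Q X Y : Type*} [CommSemiring R] [AddCommMonoid P] [Module R P]
  [AddCommMonoid Q] [Module R Q] [AddCommMonoid X] [Module R X] [AddCommMonoid Y] [Module R Y]

theorem rid_lTensor_rTensor (φ : X →ₗ[R] R) (f : P →ₗ[R] Q) (x : P ⊗[R] X) :
    TensorProduct.rid R Q (LinearMap.lTensor Q φ (LinearMap.rTensor X f x)) =
      f (TensorProduct.rid R P (LinearMap.lTensor P φ x)) := by
  induction x using TensorProduct.induction_on with
  | zero => simp
  | tmul p a => simp
  | add x y hx hy => simp only [map_add, hx, hy]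

theorem lTensor_rid_comp_lTensor_assoc (φ : Y →ₗ[R] R) (y : (P ⊗[R] X) ⊗[R] Y) :
    LinearMap.lTensor P ((TensorProduct.rid R X).toLinearMap ∘ₗ LinearMap.lTensor X φ)
        (TensorProduct.assoc R P X Y y) =
      TensorProduct.rid R (P ⊗[R] X) (LinearMap.lTensor (P ⊗[R] X) φ y) := by
  induction y using TensorProduct.induction_on with
  | zero => simp
  | tmul x b =>
    induction x using TensorProduct.induction_on with
    | zero => simp
    | tmul p a => simp [smul_tmul']
    | add x₁ x₂ h₁ h₂ => simp only [add_tmul, map_add, h₁, h₂]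
  | add y₁ y₂ h₁ h₂ => simp only [map_add, h₁, h₂]

theorem lTensor_smulRight (φ : Y →ₗ[R] R) (a : X) (x : P ⊗[R] Y) :
    LinearMap.lTensor P (φ.smulRight a) x =
      TensorProduct.rid R P (LinearMap.lTensor P φ x) ⊗ₜ a := by
  induction x using TensorProduct.induction_on with
  | zero => simp
  | tmul p b => simp [smul_tmul']
  | add x y hx hy => simp only [map_add, hx, hy, add_tmul]

end TensorProduct

namespace Comod

variable (c : Comod k A M) (I : A →ₗ[k] k)

def reynolds : M →ₗ[k] M :=
  (TensorProduct.rid k M).toLinearMap ∘ₗ LinearMap.lTensor M I ∘ₗ c.ρ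

theorem reynolds_apply (v : M) :
    c.reynolds I v = TensorProduct.rid k M (LinearMap.lTensor M I (c.ρ v)) :=
  rfl

theorem reynolds_of_mem_invariants [One A] (hI1 : I 1 = 1) {v : M} (hv : v ∈ c.invariants) :
    c.reynolds I v = v := by
  rw [reynolds_apply, show c.ρ v = v ⊗ₜ 1 from hv]
  simp [hI1]

theorem reynolds_naturality (cN : Comod k A N) {f : M →ₗ[k] N} (hf : IsComodHom c cN f)
    (v : M) : cN.reynolds I (f v) = f (c.reynolds I v) := by
  rw [reynolds_apply, reynolds_apply, ← hf v, TensorProduct.rid_lTensor_rTensor]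

theorem reynolds_mem_invariants [One A]
    (hI : ∀ a : A, TensorProduct.rid k A (LinearMap.lTensor A I (Coalgebra.comul (R := k) a)) =
      I a • (1 : A))
    (v : M) : c.reynolds I v ∈ c.invariants := by
  have hcontract : ((TensorProduct.rid k A).toLinearMap ∘ₗ LinearMap.lTensor A I) ∘ₗ
      Coalgebra.comul (R := k) = I.smulRight (1 : A) :=
    LinearMap.ext hI
  show c.ρ (c.reynolds I v) = c.reynolds I v ⊗ₜ 1
  calc c.ρ (c.reynolds I v)
      = TensorProduct.rid k (M ⊗[k] A)
          (LinearMap.lTensor (M ⊗[k] A) I (LinearMap.rTensor A c.ρ (c.ρ v))) :=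
        (TensorProduct.rid_lTensor_rTensor I c.ρ (c.ρ v)).symm
    _ = LinearMap.lTensor M ((TensorProduct.rid k A).toLinearMap ∘ₗ LinearMap.lTensor A I)
          (LinearMap.lTensor M (Coalgebra.comul (R := k)) (c.ρ v)) := by
        rw [← TensorProduct.lTensor_rid_comp_lTensor_assoc, c.coassoc]
    _ = LinearMap.lTensor M (I.smulRight (1 : A)) (c.ρ v) := by
        rw [← hcontract]; exact (LinearMap.lTensor_comp_apply ..).symm
    _ = c.reynolds I v ⊗ₜ 1 := TensorProduct.lTensor_smulRight I 1 (c.ρ v)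

end Comod

theorem stmt_16_general (k A : Type*) [CommRing k] [CommRing A] [HopfAlgebra k A]
    (I : A →ₗ[k] k) (hI1 : I 1 = 1)
    (hleft : ∀ a : A,
      (TensorProduct.rid k A) (LinearMap.lTensor A I (Coalgebra.comul (R := k) a)) =
        algebraMap k A (I a))
    (V : Type*) [AddCommGroup V] [Module k V] (c : Comod k A V) :
    (∀ v ∈ c.invariants,
        (TensorProduct.rid k V) (LinearMap.lTensor V I (c.ρ v)) = v) ∧
    (∀ v : V,
        (TensorProduct.rid k V) (LinearMap.lTensor V I (c.ρ v)) ∈ c.invariants) ∧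
    (∀ (W : Type*) [AddCommGroup W] [Module k W] (cW : Comod k A W) (φ : V →ₗ[k] W),
        IsComodHom c cW φ →
        ∀ v : V, (TensorProduct.rid k W) (LinearMap.lTensor W I (cW.ρ (φ v))) =
          φ ((TensorProduct.rid k V) (LinearMap.lTensor V I (c.ρ v)))) :=
  ⟨fun _ hv ↦ c.reynolds_of_mem_invariants I hI1 hv,
    c.reynolds_mem_invariants I fun a ↦ (hleft a).trans (Algebra.algebraMap_eq_smul_one _),
    fun _ _ _ cW _ hφ ↦ c.reynolds_naturality I cW hφ⟩

/-- Let `k` be a commutative ring, `A` a commutative Hopf algebra over `k`, and suppose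
`I : A → k` is `k`-linear with `I 1 = 1` which is bi-invariant: `(id ⊗ I) ∘ Δ_A = unit ∘ I`
and `(I ⊗ id) ∘ Δ_A = unit ∘ I` (as happens for the projection along a bi-stable comodule
complement `P` of `k ⊆ A`).  Then for every `A`-comodule `V`, the Reynolds operator
`R_V := (id_V ⊗ I) ∘ Δ_V : V → V` satisfies: (i) `R_V v = v` for all `v ∈ V^G`; (ii) the image
of `R_V` lies in `V^G`; (iii) `R_V` is natural in `V`. -/
theorem stmt_16 (k A : Type*) [CommRing k] [CommRing A] [HopfAlgebra k A]
    (I : A →ₗ[k] k) (hI1 : I 1 = 1)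
    (hleft : ∀ a : A,
      (TensorProduct.rid k A) (LinearMap.lTensor A I (Coalgebra.comul (R := k) a)) =
        algebraMap k A (I a))
    (hright : ∀ a : A,
      (TensorProduct.lid k A) (LinearMap.rTensor A I (Coalgebra.comul (R := k) a)) =
        algebraMap k A (I a))
    (V : Type*) [AddCommGroup V] [Module k V] (c : Comod k A V) :
    (∀ v ∈ c.invariants,
        (TensorProduct.rid k V) (LinearMap.lTensor V I (c.ρ v)) = v) ∧
    (∀ v : V,
        (TensorProduct.rid k V) (LinearMap.lTensor V I (c.ρ v)) ∈ c.invariants) ∧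
    (∀ (W : Type*) [AddCommGroup W] [Module k W] (cW : Comod k A W) (φ : V →ₗ[k] W),
        IsComodHom c cW φ →
        ∀ v : V, (TensorProduct.rid k W) (LinearMap.lTensor W I (cW.ρ (φ v))) =
          φ ((TensorProduct.rid k V) (LinearMap.lTensor V I (c.ρ v)))) :=
  stmt_16_general k A I hI1 hleft V c
end

section
/- Let k → A be a faithfully flat extension of commutative rings and H a flat commutative Hopf algebra over k. If for every surjection of H ⊗_k A-comodules the invariants map is surjective (i.e., the base-changed group is linearly reductive over A), then for every surjection of H-comodules V → W the map V^G → W^G is surjective (G is linearly reductive over k). -/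
open TensorProduct

variable {k A M N : Type*} [CommRing k]
  [AddCommGroup A] [Module k A] [Coalgebra k A]
  [AddCommGroup M] [Module k M] [AddCommGroup N] [Module k N]

/-- A comodule over the base-changed Hopf algebra `H ⊗[k] A`, encoded via the canonical
identification `M ⊗[A] (H ⊗[k] A) ≅ M ⊗[k] H`: an `A`-module `M` together with an `A`-linear
coaction `ρ : M → M ⊗[k] H` which is coassociative and counital for the coalgebra structure
of `H` over `k`. -/
structure ComodOver (k H A M : Type*) [CommRing k]
    [AddCommGroup H] [Module k H] [Coalgebra k H]
    [CommRing A] [Algebra k A]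
    [AddCommGroup M] [Module k M] [Module A M] [IsScalarTower k A M]
    [SMulCommClass k A M] where
  ρ : M →ₗ[A] M ⊗[k] H
  coassoc : ∀ m : M,
    (TensorProduct.assoc k M H H)
        (LinearMap.rTensor H (ρ.restrictScalars k) (ρ m)) =
      LinearMap.lTensor M (Coalgebra.comul (R := k)) (ρ m)
  counit : ∀ m : M,
    (TensorProduct.rid k M) (LinearMap.lTensor M (Coalgebra.counit (R := k)) (ρ m)) = m

variable {k H A M N : Type*} [CommRing k]
  [AddCommGroup H] [Module k H] [Coalgebra k H] [CommRing A] [Algebra k A]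

/-- The invariants `M^{G_A}` of a comodule over `H ⊗[k] A`: elements with `ρ m = m ⊗ 1`. -/
def ComodOver.invariants [One H]
    [AddCommGroup M] [Module k M] [Module A M] [IsScalarTower k A M] [SMulCommClass k A M]
    (c : ComodOver k H A M) : Submodule A M where
  carrier := {m | c.ρ m = m ⊗ₜ[k] (1 : H)}
  add_mem' := by
    intro a b ha hb
    simp only [Set.mem_setOf_eq, map_add] at *
    rw [ha, hb, TensorProduct.add_tmul]
  zero_mem' := by simp
  smul_mem' := by
    intro r m hm
    simp only [Set.mem_setOf_eq, map_smul] at *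
    rw [hm, TensorProduct.smul_tmul']

/-- An `A`-linear map between comodules over `H ⊗[k] A` is a comodule homomorphism if it
intertwines the coactions. -/
def IsComodOverHom
    [AddCommGroup M] [Module k M] [Module A M] [IsScalarTower k A M] [SMulCommClass k A M]
    [AddCommGroup N] [Module k N] [Module A N] [IsScalarTower k A N] [SMulCommClass k A N]
    (cM : ComodOver k H A M) (cN : ComodOver k H A N) (f : M →ₗ[A] N) : Prop :=
  ∀ m : M, LinearMap.rTensor H (f.restrictScalars k) (cM.ρ m) = cN.ρ (f m)

/-! The invariants of an `H`-comodule `V` are the kernel of `ρ - (· ⊗ 1) : V → V ⊗ H`. For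
flat `A`, tensoring this kernel with `A` gives the kernel of the base-changed map, i.e. the
invariants of the `H ⊗ A`-comodule `A ⊗ V`. Hence a surjection `V → W` of comodules induces a
map `V^G → W^G` whose base change to `A` is the surjection `(A ⊗ V)^{G_A} → (A ⊗ W)^{G_A}`,
and faithful flatness of `A` reflects surjectivity. -/

section

open LinearMap

theorem Module.FaithfullyFlat.ker_le_map_ker_of_lTensor {R M V V' W W' : Type*} [CommRing R]
    [AddCommGroup M] [Module R M] [Module.FaithfullyFlat R M]
    [AddCommGroup V] [Module R V] [AddCommGroup V'] [Module R V']
    [AddCommGroup W] [Module R W] [AddCommGroup W'] [Module R W']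
    (D : V →ₗ[R] V') (E : W →ₗ[R] W') (φ : V →ₗ[R] W)
    (h : ker (E.lTensor M) ≤ (ker (D.lTensor M)).map (φ.lTensor M)) :
    ker E ≤ (ker D).map φ := by
  -- by faithful flatness it suffices that `ker E → W ⧸ φ (ker D)` vanishes after tensoring
  set q := ((ker D).map φ).mkQ ∘ₗ (ker E).subtype
  suffices hq : q = 0 by
    intro w hw
    simpa [q] using congr($hq ⟨w, hw⟩)
  rw [Module.FaithfullyFlat.zero_iff_lTensor_zero R M]
  refine TensorProduct.ext' fun m w => ?_
  obtain ⟨x, hx, hxw⟩ := h (show m ⊗ₜ (w : W) ∈ ker (E.lTensor M) by simp)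
  have hx' : x ∈ range ((ker D).subtype.lTensor M) := by
    rwa [← exact_iff.mp (Module.Flat.lTensor_exact M (exact_subtype_ker_map D))]
  obtain ⟨y, rfl⟩ := hx'
  have hzero : ((ker D).map φ).mkQ ∘ₗ φ ∘ₗ (ker D).subtype = 0 := by
    ext v
    exact (Submodule.Quotient.mk_eq_zero _).2 (Submodule.mem_map_of_mem v.2)
  have := congr(lTensor M $hzero y)
  simp only [lTensor_comp, comp_apply, hxw, lTensor_zero, LinearMap.zero_apply] at this
  simpa [q] using this

variable {k H V W : Type*} [CommRing k] [AddCommGroup H] [Module k H]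
  [AddCommGroup V] [Module k V] [AddCommGroup W] [Module k W]

variable (k H V) in
noncomputable def trivialCoaction [One H] : V →ₗ[k] V ⊗[k] H :=
  (TensorProduct.mk k V H).flip 1

@[simp]
lemma trivialCoaction_apply [One H] (v : V) : trivialCoaction k H V v = v ⊗ₜ (1 : H) := rfl

variable (A : Type*) [CommRing A] [Algebra k A]

lemma TensorProduct.AlgebraTensorModule.assoc_symm_tmul_eq_rTensor (a : A) (y : V ⊗[k] H) :
    (assoc k k A A V H).symm (a ⊗ₜ y) = LinearMap.rTensor H (TensorProduct.mk k A V a) y := by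
  induction y using TensorProduct.induction_on with
  | zero => simp
  | tmul v h => rfl
  | add y z hy hz => simp only [tmul_add, map_add, hy, hz]

variable [Coalgebra k H]

lemma Comod.invariants_eq_ker [One H] (c : Comod k H V) :
    c.invariants = ker (c.ρ - trivialCoaction k H V) := by
  ext v
  simp [Comod.invariants, sub_eq_zero]

noncomputable def Comod.baseChangeCoaction (c : Comod k H V) :
    A ⊗[k] V →ₗ[A] (A ⊗[k] V) ⊗[k] H :=
  (AlgebraTensorModule.assoc k k A A V H).symm.toLinearMap ∘ₗ c.ρ.baseChange A

lemma Comod.baseChangeCoaction_tmul (c : Comod k H V) (a : A) (v : V) :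
    c.baseChangeCoaction A (a ⊗ₜ v) = rTensor H (TensorProduct.mk k A V a) (c.ρ v) := by
  simp [baseChangeCoaction, AlgebraTensorModule.assoc_symm_tmul_eq_rTensor]

lemma Comod.baseChangeCoaction_comp_mk (c : Comod k H V) (a : A) :
    (c.baseChangeCoaction A).restrictScalars k ∘ₗ TensorProduct.mk k A V a =
      rTensor H (TensorProduct.mk k A V a) ∘ₗ c.ρ :=
  LinearMap.ext (c.baseChangeCoaction_tmul A a)

lemma Comod.baseChangeCoaction_coassoc (c : Comod k H V) (a : A) (v : V) :
    TensorProduct.assoc k (A ⊗[k] V) H H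
        (rTensor H ((c.baseChangeCoaction A).restrictScalars k)
          (c.baseChangeCoaction A (a ⊗ₜ v))) =
      lTensor (A ⊗[k] V) (Coalgebra.comul (R := k))
        (c.baseChangeCoaction A (a ⊗ₜ v)) := by
  calc _ = TensorProduct.assoc k (A ⊗[k] V) H H
        (rTensor H (rTensor H (TensorProduct.mk k A V a)) (rTensor H c.ρ (c.ρ v))) := by
        rw [baseChangeCoaction_tmul, ← rTensor_comp_apply, baseChangeCoaction_comp_mk,
          rTensor_comp_apply]
    _ = rTensor (H ⊗[k] H) (TensorProduct.mk k A V a)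
          (TensorProduct.assoc k V H H (rTensor H c.ρ (c.ρ v))) := by
        rw [rTensor_tensor]
        simp
    _ = rTensor (H ⊗[k] H) (TensorProduct.mk k A V a)
          (lTensor V (Coalgebra.comul (R := k)) (c.ρ v)) := by
        rw [c.coassoc]
    _ = _ := by
        rw [baseChangeCoaction_tmul]
        exact congr($((rTensor_comp_lTensor (f := TensorProduct.mk k A V a)
          (g := Coalgebra.comul)).trans (lTensor_comp_rTensor ..).symm) (c.ρ v))

lemma Comod.baseChangeCoaction_counit (c : Comod k H V) (a : A) (v : V) :
    TensorProduct.rid k (A ⊗[k] V)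
        (lTensor (A ⊗[k] V) (Coalgebra.counit (R := k)) (c.baseChangeCoaction A (a ⊗ₜ v))) =
      a ⊗ₜ v := by
  conv_rhs => rw [← c.counit v]
  rw [baseChangeCoaction_tmul]
  induction c.ρ v using TensorProduct.induction_on with
  | zero => simp
  | tmul v h => simp [tmul_smul]
  | add y z hy hz => simp only [map_add, hy, hz, tmul_add]

noncomputable def Comod.baseChange (c : Comod k H V) : ComodOver k H A (A ⊗[k] V) where
  ρ := c.baseChangeCoaction A
  coassoc m := by
    induction m using TensorProduct.induction_on with
    | zero => simp
    | tmul a v => exact c.baseChangeCoaction_coassoc A a v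
    | add x y hx hy => simp only [map_add, hx, hy]
  counit m := by
    induction m using TensorProduct.induction_on with
    | zero => simp
    | tmul a v => exact c.baseChangeCoaction_counit A a v
    | add x y hx hy => simp only [map_add, hx, hy]

lemma IsComodHom.baseChange {cV : Comod k H V} {cW : Comod k H W} {φ : V →ₗ[k] W}
    (hφ : IsComodHom cV cW φ) :
    IsComodOverHom (cV.baseChange A) (cW.baseChange A) (φ.baseChange A) := by
  intro m
  induction m using TensorProduct.induction_on with
  | zero => simp
  | tmul a v =>
    simp only [Comod.baseChange, Comod.baseChangeCoaction_tmul, baseChange_tmul, ← hφ v,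
      ← rTensor_comp_apply]
    rfl
  | add x y hx hy => simp only [map_add, hx, hy]

lemma Comod.mem_baseChange_invariants_iff [One H] (c : Comod k H V) (x : A ⊗[k] V) :
    x ∈ (c.baseChange A).invariants ↔ x ∈ ker (lTensor A (c.ρ - trivialCoaction k H V)) := by
  have h_one : x ⊗ₜ (1 : H) =
      (AlgebraTensorModule.assoc k k A A V H).symm (lTensor A (trivialCoaction k H V) x) := by
    induction x using TensorProduct.induction_on with
    | zero => simp
    | tmul a v => rfl
    | add x y hx hy => simp only [map_add, add_tmul, hx, hy]
  change (AlgebraTensorModule.assoc k k A A V H).symm (c.ρ.baseChange A x) = x ⊗ₜ (1 : H) ↔ _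
  rw [h_one, LinearEquiv.injective _ |>.eq_iff, mem_ker, lTensor_sub, LinearMap.sub_apply,
    sub_eq_zero, baseChange_eq_ltensor]

end

universe u

theorem stmt_17_general (k H A : Type u) [CommRing k] [CommRing H] [HopfAlgebra k H]
    [CommRing A] [Algebra k A] [Module.FaithfullyFlat k A]
    (hLRA : ∀ (M N : Type u) [AddCommGroup M] [Module k M] [Module A M]
      [IsScalarTower k A M] [SMulCommClass k A M]
      [AddCommGroup N] [Module k N] [Module A N] [IsScalarTower k A N] [SMulCommClass k A N]
      (cM : ComodOver k H A M) (cN : ComodOver k H A N) (f : M →ₗ[A] N),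
      IsComodOverHom cM cN f → Function.Surjective f →
      ∀ n ∈ cN.invariants, ∃ m ∈ cM.invariants, f m = n)
    (V W : Type u) [AddCommGroup V] [Module k V] [AddCommGroup W] [Module k W]
    (cV : Comod k H V) (cW : Comod k H W)
    (φ : V →ₗ[k] W) (hφhom : IsComodHom cV cW φ) (hφ : Function.Surjective φ) :
    ∀ w ∈ cW.invariants, ∃ v ∈ cV.invariants, φ v = w := by
  have h_base : LinearMap.ker ((cW.ρ - trivialCoaction k H W).lTensor A) ≤
      (LinearMap.ker ((cV.ρ - trivialCoaction k H V).lTensor A)).map (φ.lTensor A) := by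
    intro y hy
    obtain ⟨x, hx, rfl⟩ := hLRA _ _ (cV.baseChange A) (cW.baseChange A) (φ.baseChange A)
      (hφhom.baseChange A) (φ.baseChange_surjective A hφ) y
      ((cW.mem_baseChange_invariants_iff A y).2 hy)
    exact ⟨x, (cV.mem_baseChange_invariants_iff A x).1 hx, rfl⟩
  have h := Module.FaithfullyFlat.ker_le_map_ker_of_lTensor _ _ φ h_base
  rwa [← cV.invariants_eq_ker, ← cW.invariants_eq_ker] at h

/-- Let `k → A` be a faithfully flat extension of commutative rings and `H` a flat commutative
Hopf algebra over `k`.  If every surjection of `H ⊗[k] A`-comodules is surjective on invariants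
(the base-changed group is linearly reductive over `A`), then every surjection of `H`-comodules
`V → W` is surjective on invariants (`G` is linearly reductive over `k`). -/
theorem stmt_17 (k H A : Type u) [CommRing k] [CommRing H] [HopfAlgebra k H] [Module.Flat k H]
    [CommRing A] [Algebra k A] [Module.FaithfullyFlat k A]
    (hLRA : ∀ (M N : Type u) [AddCommGroup M] [Module k M] [Module A M]
      [IsScalarTower k A M] [SMulCommClass k A M]
      [AddCommGroup N] [Module k N] [Module A N] [IsScalarTower k A N] [SMulCommClass k A N]
      (cM : ComodOver k H A M) (cN : ComodOver k H A N) (f : M →ₗ[A] N),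
      IsComodOverHom cM cN f → Function.Surjective f →
      ∀ n ∈ cN.invariants, ∃ m ∈ cM.invariants, f m = n)
    (V W : Type u) [AddCommGroup V] [Module k V] [AddCommGroup W] [Module k W]
    (cV : Comod k H V) (cW : Comod k H W)
    (φ : V →ₗ[k] W) (hφhom : IsComodHom cV cW φ) (hφ : Function.Surjective φ) :
    ∀ w ∈ cW.invariants, ∃ v ∈ cV.invariants, φ v = w :=
  stmt_17_general k H A hLRA V W cV cW φ hφhom hφ
end
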